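/- (Lemma 3.6) Let U ⊆ ℂ be a nonempty connected open set, and let a, μ : U → ℂ be holomorphic with μ(w) ≠ 0 and |a(w)| ≠ 1 for all w ∈ U. For θ ∈ ℝ and w ∈ U define K(θ;w) = |a'(w)|²((1 + |a(w)|⁴)cos θ − 2|a(w)|²)/(|μ(w)|²(1 − 2|a(w)|²cos θ + |a(w)|⁴)³). Then the following are equivalent: (1) there exists θ₀ ∈ ℝ such that K(θ₀;w) = 0 for every w ∈ U; (2) the function a is constant on U; (3) the maps w ↦ L₃(a(w)) and, for every θ ∈ ℝ, w ↦ L₀(e^{iθ}a(w)) are constant on U; (4) for every θ ∈ ℝ and every w ∈ U, K(θ;w) = 0 (i.e., every point of every surface of the θ-family is planar). -/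

import Mathlib

open Complex ComplexConjugate

/-- `L₃(a) = (1+|a|², a+conj a, −i(a−conj a), −1+|a|²)` (a real vector). -/
noncomputable def L3 (a : ℂ) : Fin 4 → ℂ :=
  ![1 + (‖a‖ : ℂ) ^ 2, a + conj a, -I * (a - conj a), -1 + (‖a‖ : ℂ) ^ 2]

/-- `L₀(e^{iθ}a) = (1+|a|², ae^{iθ}+conj a·e^{−iθ}, −i(ae^{iθ}−conj a·e^{−iθ}), 1−|a|²)`
(a real vector). -/
noncomputable def L0 (θ : ℝ) (a : ℂ) : Fin 4 → ℂ :=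
  ![1 + (‖a‖ : ℂ) ^ 2,
    a * Complex.exp (θ * I) + conj a * Complex.exp (-(θ : ℂ) * I),
    -I * (a * Complex.exp (θ * I) - conj a * Complex.exp (-(θ : ℂ) * I)),
    1 - (‖a‖ : ℂ) ^ 2]

/-! If `K(θ₀;·) ≡ 0`, then wherever `a' ≠ 0` the modulus `|a|` is a root of the nonzero
polynomial `(1 + r⁴) cos θ₀ − 2r²`. A continuous function with values in a finite set is locally
constant, so `|a|` is locally constant there, and by the maximum modulus principle so is `a`,
contradicting `a' ≠ 0`. Hence `a' ≡ 0` and `a` is constant on the connected set `U`. -/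

lemma L3_injective : Function.Injective L3 := by
  intro a b h
  have h1 := congrFun h 1
  have h2 := congrFun h 2
  simp only [L3, Matrix.cons_val_zero, Matrix.cons_val_one, Matrix.cons_val_two, Matrix.head_cons,
    Matrix.tail_cons] at h1 h2
  have h2' : a - conj a = b - conj b := mul_left_cancel₀ (neg_ne_zero.mpr I_ne_zero) h2
  linear_combination (h1 + h2') / 2

lemma finite_setOf_curvature_numerator_eq_zero (c : ℝ) :
    {r : ℝ | (1 + r ^ 4) * c - 2 * r ^ 2 = 0}.Finite := by
  open Polynomial in
  let p : ℝ[X] := C c * X ^ 4 - C 2 * X ^ 2 + C c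
  have hp : p ≠ 0 := fun h => by
    simpa [p, coeff_X_pow, coeff_C] using congrArg (coeff · 2) h
  refine (finite_setOfPred_isRoot hp).subset fun r hr => ?_
  simp only [Set.mem_ofPred_eq, IsRoot, p, eval_add, eval_sub, eval_mul, eval_C, eval_pow,
    eval_X] at hr ⊢
  linear_combination hr

lemma curvature_denominator_pos {r c : ℝ} (hr0 : 0 ≤ r) (hr1 : r ≠ 1) (hc : c ≤ 1) :
    0 < 1 - 2 * r ^ 2 * c + r ^ 4 := by
  have hr2 : 1 - r ^ 2 ≠ 0 := by
    rwa [sub_ne_zero, ne_comm, Ne, pow_eq_one_iff_of_nonneg hr0 two_ne_zero]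
  have hsq : 0 < (1 - r ^ 2) ^ 2 := sq_pos_of_ne_zero hr2
  nlinarith [mul_nonneg (sq_nonneg r) (sub_nonneg.mpr hc)]

lemma curvature_numerator_eq_zero {d m r c : ℝ} (hd : d ≠ 0) (hm : m ≠ 0) (hr0 : 0 ≤ r)
    (hr1 : r ≠ 1) (hc : c ≤ 1)
    (hK : d ^ 2 * ((1 + r ^ 4) * c - 2 * r ^ 2) / (m ^ 2 * (1 - 2 * r ^ 2 * c + r ^ 4) ^ 3) = 0) :
    (1 + r ^ 4) * c - 2 * r ^ 2 = 0 := by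
  simpa [hd, hm, (curvature_denominator_pos hr0 hr1 hc).ne'] using hK

lemma deriv_eq_zero_of_norm_mem_finite {a : ℂ → ℂ} {U : Set ℂ} (hU : IsOpen U)
    (ha : DifferentiableOn ℂ a U) {S : Set ℝ} (hS : S.Finite)
    (hmem : ∀ w ∈ U, deriv a w ≠ 0 → ‖a w‖ ∈ S) {w : ℂ} (hw : w ∈ U) : deriv a w = 0 := by
  by_contra hne
  have hcont : ContinuousAt (deriv a) w := ((ha.analyticOnNhd hU).deriv w hw).continuousAt
  obtain ⟨ε, hε, hball⟩ := Metric.eventually_nhds_iff_ball.mp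
    ((hcont.eventually_ne hne).and (hU.eventually_mem hw))
  have hB := (convex_ball w ε).isPreconnected
  have haB : DifferentiableOn ℂ a (Metric.ball w ε) := ha.mono fun z hz => (hball z hz).2
  have hnorm : ∀ z ∈ Metric.ball w ε, ‖a z‖ = ‖a w‖ := fun z hz =>
    hB.constant_of_mapsTo hS.isDiscrete (continuous_norm.comp_continuousOn haB.continuousOn)
      (fun x hx => hmem x (hball x hx).2 (hball x hx).1) hz (Metric.mem_ball_self hε)
  have hconst := Complex.eqOn_of_isPreconnected_of_isMaxOn_norm hB Metric.isOpen_ball haB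
    (Metric.mem_ball_self hε) fun z hz => (hnorm z hz).le
  refine hne ?_
  rw [(Filter.eventuallyEq_of_mem (Metric.ball_mem_nhds w hε) hconst).deriv_eq]
  exact deriv_const w _

theorem stmt_16 (U : Set ℂ) (hU : IsOpen U) (hconn : IsConnected U)
    (a μ : ℂ → ℂ)
    (ha : ∀ w ∈ U, DifferentiableAt ℂ a w)
    (hμ0 : ∀ w ∈ U, μ w ≠ 0) (ha1 : ∀ w ∈ U, ‖a w‖ ≠ 1)
    (K : ℝ → ℂ → ℝ)
    (hK : ∀ θ w, K θ w =
      ‖deriv a w‖ ^ 2 *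
        ((1 + ‖a w‖ ^ 4) * Real.cos θ - 2 * ‖a w‖ ^ 2) /
        (‖μ w‖ ^ 2 *
          (1 - 2 * ‖a w‖ ^ 2 * Real.cos θ + ‖a w‖ ^ 4) ^ 3)) :
    List.TFAE
      [∃ θ0 : ℝ, ∀ w ∈ U, K θ0 w = 0,
       ∀ w ∈ U, ∀ w' ∈ U, a w = a w',
       (∀ w ∈ U, ∀ w' ∈ U, L3 (a w) = L3 (a w')) ∧
         (∀ θ : ℝ, ∀ w ∈ U, ∀ w' ∈ U, L0 θ (a w) = L0 θ (a w')),
       ∀ θ : ℝ, ∀ w ∈ U, K θ w = 0] := by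
  have hdiff : DifferentiableOn ℂ a U := fun w hw => (ha w hw).differentiableWithinAt
  tfae_have 1 → 2 := by
    rintro ⟨θ0, hθ0⟩ w hw w' hw'
    have hroot : ∀ z ∈ U, deriv a z ≠ 0 →
        ‖a z‖ ∈ {r : ℝ | (1 + r ^ 4) * Real.cos θ0 - 2 * r ^ 2 = 0} := fun z hz hdz =>
      curvature_numerator_eq_zero (norm_ne_zero_iff.mpr hdz) (norm_ne_zero_iff.mpr (hμ0 z hz))
        (norm_nonneg _) (ha1 z hz) (Real.cos_le_one θ0) ((hK θ0 z).symm.trans (hθ0 z hz))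
    have hderiv : U.EqOn (deriv a) 0 := fun z hz =>
      deriv_eq_zero_of_norm_mem_finite hU hdiff
        (finite_setOf_curvature_numerator_eq_zero (Real.cos θ0)) hroot hz
    exact hU.is_const_of_deriv_eq_zero hconn.isPreconnected hdiff hderiv hw hw'
  tfae_have 2 → 3 := fun h =>
    ⟨fun w hw w' hw' => by rw [h w hw w' hw'], fun θ w hw w' hw' => by rw [h w hw w' hw']⟩
  tfae_have 3 → 2 := fun h w hw w' hw' => L3_injective (h.1 w hw w' hw')
  tfae_have 2 → 4 := by
    intro h θ w hw
    have hconst : a =ᶠ[nhds w] fun _ => a w :=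
      Filter.eventuallyEq_of_mem (hU.mem_nhds hw) fun z hz => h z hz w hw
    simp [hK, hconst.deriv_eq]
  tfae_have 4 → 1 := fun h => ⟨0, fun w hw => h 0 w hw⟩
  tfae_finish
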